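/- Let $n \in \mathbb{S}^2$ and define $\mathcal{H}_n$ on $\mathbb{S}^3_0$ as above. Then for every $Q \in \mathbb{S}^3_0$ and every $n^\perp \in \mathbb{R}^3$ with $n^\perp \cdot n = 0$, one has $\mathcal{H}_n(Q) : (n (n^\perp)^T + n^\perp n^T) = 0$; that is, $\mathcal{H}_n(Q) \in (\mathrm{Ker}\,\mathcal{H}_n)^{\perp}$. -/
import Mathlib


open Matrix BigOperators

noncomputable section

abbrev M3 := Matrix (Fin 3) (Fin 3) ℝ

def frob (A B : M3) : ℝ := ∑ i, ∑ j, A i j * B i j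

def Hn (b c s : ℝ) (n : Fin 3 → ℝ) (Q : M3) : M3 :=
  (b * s) • (Q - (vecMulVec n n * Q + Q * vecMulVec n n)
      + (2/3 * frob Q (vecMulVec n n)) • (1 : M3))
    + (2 * c * s ^ 2 * frob Q (vecMulVec n n)) • (vecMulVec n n - (1/3 : ℝ) • (1 : M3))

/-- `ℋₙ(Q)` is orthogonal to `Ker ℋₙ`:
`ℋₙ(Q) : (n(n^⊥)ᵀ + n^⊥nᵀ) = 0` whenever `n^⊥ ⊥ n`. -/
theorem stmt6 (b c s : ℝ) (n : Fin 3 → ℝ) (hn : (∑ i, n i * n i) = 1)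
    (Q : M3) (hsym : Qᵀ = Q) (htr : Q.trace = 0)
    (m : Fin 3 → ℝ) (hm : (∑ i, m i * n i) = 0) :
    frob (Hn b c s n Q) (vecMulVec n m + vecMulVec m n) = 0 := by
  have e10 : Q 1 0 = Q 0 1 := by simpa using congrFun (congrFun hsym 0) 1
  have e20 : Q 2 0 = Q 0 2 := by simpa using congrFun (congrFun hsym 0) 2
  have e21 : Q 2 1 = Q 1 2 := by simpa using congrFun (congrFun hsym 1) 2
  simp only [Fin.sum_univ_three] at hn hm
  simp only [frob, Hn, Fin.sum_univ_three, Matrix.add_apply, Matrix.sub_apply,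
    Matrix.smul_apply, Matrix.mul_apply, Matrix.one_apply, vecMulVec_apply,
    smul_eq_mul, Fin.sum_univ_three, Fin.isValue, Fin.reduceEq, reduceIte,
    one_ne_zero, if_true, if_false]
  norm_num
  rw [e10, e20, e21]
  set α := n 0 * (Q 0 0 * n 0 + Q 0 1 * n 1 + Q 0 2 * n 2)
      + n 1 * (Q 0 1 * n 0 + Q 1 1 * n 1 + Q 1 2 * n 2)
      + n 2 * (Q 0 2 * n 0 + Q 1 2 * n 1 + Q 2 2 * n 2) with hα
  have β := m 0 * (Q 0 0 * n 0 + Q 0 1 * n 1 + Q 0 2 * n 2)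
      + m 1 * (Q 0 1 * n 0 + Q 1 1 * n 1 + Q 1 2 * n 2)
      + m 2 * (Q 0 2 * n 0 + Q 1 2 * n 1 + Q 2 2 * n 2)
  linear_combination ((-2*b*s*(m 0 * (Q 0 0 * n 0 + Q 0 1 * n 1 + Q 0 2 * n 2)
      + m 1 * (Q 0 1 * n 0 + Q 1 1 * n 1 + Q 1 2 * n 2)
      + m 2 * (Q 0 2 * n 0 + Q 1 2 * n 1 + Q 2 2 * n 2)))
      + 4*c*s^2*α*(m 0 * n 0 + m 1 * n 1 + m 2 * n 2)) * hn
    + ((-(2:ℝ)/3)*b*s*α + ((8:ℝ)/3)*c*s^2*α) * hm
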